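/- Let (A,{·,·},μ,α,β) be a BiHom-Poisson algebra, let D₁ be a generalized (α^k,β^l)-derivation of A and D₂ a generalized (α^{k'},β^{l'})-derivation of A. Then [D₁,D₂] = D₁∘D₂ − D₂∘D₁ is a generalized (α^{k+k'},β^{l+l'})-derivation of A. -/
import Mathlib


/-- A BiHom-Poisson algebra structure on a `K`-vector space `A` (K a field of
characteristic 0), given by bilinear maps `br` (the bracket `{·,·}`) and
`mul` (the product `μ`) and commuting linear maps `α`, `β` that are
multiplicative with respect to both operations. -/
structure IsBiHomPoisson {K A : Type*} [Field K] [CharZero K]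
    [AddCommGroup A] [Module K A]
    (br mul : A →ₗ[K] A →ₗ[K] A) (α β : A →ₗ[K] A) : Prop where
  comm_maps : ∀ x, α (β x) = β (α x)
  map_mul_alpha : ∀ x y, α (mul x y) = mul (α x) (α y)
  map_mul_beta : ∀ x y, β (mul x y) = mul (β x) (β y)
  map_br_alpha : ∀ x y, α (br x y) = br (α x) (α y)
  map_br_beta : ∀ x y, β (br x y) = br (β x) (β y)
  assoc : ∀ x y z, mul (mul x y) (β z) = mul (α x) (mul y z)
  mul_comm : ∀ x y, mul (β x) (α y) = mul (β y) (α x)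
  skew : ∀ x y, br (β x) (α y) = - br (β y) (α x)
  jacobi : ∀ x y z,
    br (β (β x)) (br (β y) (α z)) + br (β (β y)) (br (β z) (α x))
      + br (β (β z)) (br (β x) (α y)) = 0
  leibniz : ∀ x y z,
    br (α (β x)) (mul y z) = mul (br (β x) y) (β z) + mul (β y) (br (α x) z)

/-- A generalized `(α^k, β^l)`-derivation of a BiHom-Poisson algebra. -/
def IsBHGenDerivation {K A : Type*} [Field K] [CharZero K]
    [AddCommGroup A] [Module K A]
    (br mul : A →ₗ[K] A →ₗ[K] A) (α β : A →ₗ[K] A) (k l : ℕ)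
    (D : A →ₗ[K] A) : Prop :=
  (∀ x, D (α x) = α (D x)) ∧ (∀ x, D (β x) = β (D x)) ∧
  ∃ D' D'' : A →ₗ[K] A,
    (∀ x, D' (α x) = α (D' x)) ∧ (∀ x, D' (β x) = β (D' x)) ∧
    (∀ x, D'' (α x) = α (D'' x)) ∧ (∀ x, D'' (β x) = β (D'' x)) ∧
    (∀ x y, br (D x) ((α ^ k) ((β ^ l) y))
      + br ((α ^ k) ((β ^ l) x)) (D' y) = D'' (br x y)) ∧
    (∀ x y, mul (D x) ((α ^ k) ((β ^ l) y))
      + mul ((α ^ k) ((β ^ l) x)) (D' y) = D'' (mul x y))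

private lemma commPow {K A : Type*} [Field K] [CharZero K]
    [AddCommGroup A] [Module K A] (f g : A →ₗ[K] A)
    (h : ∀ x, f (g x) = g (f x)) : ∀ (n : ℕ) (x), f ((g ^ n) x) = (g ^ n) (f x) := by
  intro n
  induction n with
  | zero => intro x; simp
  | succ n ih => intro x; rw [pow_succ, Module.End.mul_apply, Module.End.mul_apply, ih, h]

private lemma keyLemma {K A : Type*} [Field K] [CharZero K]
    [AddCommGroup A] [Module K A]
    (op : A →ₗ[K] A →ₗ[K] A) (α β : A →ₗ[K] A) (k l k' l' : ℕ)
    (hαβ : ∀ x, α (β x) = β (α x))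
    (D₁ D₂ D₁' D₂' D₁'' D₂'' : A →ₗ[K] A)
    (hD₁α : ∀ x, D₁ (α x) = α (D₁ x)) (hD₁β : ∀ x, D₁ (β x) = β (D₁ x))
    (hD₂α : ∀ x, D₂ (α x) = α (D₂ x)) (hD₂β : ∀ x, D₂ (β x) = β (D₂ x))
    (hD₁'α : ∀ x, D₁' (α x) = α (D₁' x)) (hD₁'β : ∀ x, D₁' (β x) = β (D₁' x))
    (hD₂'α : ∀ x, D₂' (α x) = α (D₂' x)) (hD₂'β : ∀ x, D₂' (β x) = β (D₂' x))
    (h1 : ∀ x y, op (D₁ x) ((α ^ k) ((β ^ l) y))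
      + op ((α ^ k) ((β ^ l) x)) (D₁' y) = D₁'' (op x y))
    (h2 : ∀ x y, op (D₂ x) ((α ^ k') ((β ^ l') y))
      + op ((α ^ k') ((β ^ l') x)) (D₂' y) = D₂'' (op x y)) :
    ∀ x y, op ((D₁ ∘ₗ D₂ - D₂ ∘ₗ D₁) x) ((α ^ (k + k')) ((β ^ (l + l')) y))
      + op ((α ^ (k + k')) ((β ^ (l + l')) x)) ((D₁' ∘ₗ D₂' - D₂' ∘ₗ D₁') y)
      = (D₁'' ∘ₗ D₂'' - D₂'' ∘ₗ D₁'') (op x y) := by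
  intro x y
  have hab : ∀ (m n : ℕ) (z : A), (α ^ m) ((β ^ n) z) = (β ^ n) ((α ^ m) z) := by
    intro m n z
    have h1' : ∀ z, α ((β ^ n) z) = (β ^ n) (α z) := fun z => commPow α β hαβ n z
    exact (commPow (β ^ n) α (fun z => (h1' z).symm) m z).symm
  have hP : ∀ z, (α ^ (k + k')) ((β ^ (l + l')) z)
      = (α ^ k) ((β ^ l) ((α ^ k') ((β ^ l') z))) := by
    intro z
    rw [pow_add, pow_add, Module.End.mul_apply, Module.End.mul_apply, hab k' l]
  have hP2 : ∀ z, (α ^ (k + k')) ((β ^ (l + l')) z)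
      = (α ^ k') ((β ^ l') ((α ^ k) ((β ^ l) z))) := by
    intro z
    rw [add_comm k k', add_comm l l', pow_add, pow_add, Module.End.mul_apply,
      Module.End.mul_apply, hab k l']
  have hD₁αp : ∀ (n : ℕ) z, D₁ ((α ^ n) z) = (α ^ n) (D₁ z) := fun n z => commPow D₁ α hD₁α n z
  have hD₁βp : ∀ (n : ℕ) z, D₁ ((β ^ n) z) = (β ^ n) (D₁ z) := fun n z => commPow D₁ β hD₁β n z
  have hD₂αp : ∀ (n : ℕ) z, D₂ ((α ^ n) z) = (α ^ n) (D₂ z) := fun n z => commPow D₂ α hD₂α n z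
  have hD₂βp : ∀ (n : ℕ) z, D₂ ((β ^ n) z) = (β ^ n) (D₂ z) := fun n z => commPow D₂ β hD₂β n z
  have hD₁'αp : ∀ (n : ℕ) z, D₁' ((α ^ n) z) = (α ^ n) (D₁' z) := fun n z => commPow D₁' α hD₁'α n z
  have hD₁'βp : ∀ (n : ℕ) z, D₁' ((β ^ n) z) = (β ^ n) (D₁' z) := fun n z => commPow D₁' β hD₁'β n z
  have hD₂'αp : ∀ (n : ℕ) z, D₂' ((α ^ n) z) = (α ^ n) (D₂' z) := fun n z => commPow D₂' α hD₂'α n z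
  have hD₂'βp : ∀ (n : ℕ) z, D₂' ((β ^ n) z) = (β ^ n) (D₂' z) := fun n z => commPow D₂' β hD₂'β n z
  have e1 : D₁'' (D₂'' (op x y))
      = op (D₁ (D₂ x)) ((α ^ k) ((β ^ l) ((α ^ k') ((β ^ l') y))))
        + op ((α ^ k) ((β ^ l) (D₂ x))) (D₁' ((α ^ k') ((β ^ l') y)))
        + (op (D₁ ((α ^ k') ((β ^ l') x))) ((α ^ k) ((β ^ l) (D₂' y)))
        + op ((α ^ k) ((β ^ l) ((α ^ k') ((β ^ l') x)))) (D₁' (D₂' y))) := by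
    rw [← h2 x y, map_add, ← h1, ← h1]
  have e2 : D₂'' (D₁'' (op x y))
      = op (D₂ (D₁ x)) ((α ^ k') ((β ^ l') ((α ^ k) ((β ^ l) y))))
        + op ((α ^ k') ((β ^ l') (D₁ x))) (D₂' ((α ^ k) ((β ^ l) y)))
        + (op (D₂ ((α ^ k) ((β ^ l) x))) ((α ^ k') ((β ^ l') (D₁' y)))
        + op ((α ^ k') ((β ^ l') ((α ^ k) ((β ^ l) x)))) (D₂' (D₁' y))) := by
    rw [← h1 x y, map_add, ← h2, ← h2]
  have c1 : op ((α ^ k) ((β ^ l) (D₂ x))) (D₁' ((α ^ k') ((β ^ l') y)))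
      = op (D₂ ((α ^ k) ((β ^ l) x))) ((α ^ k') ((β ^ l') (D₁' y))) := by
    rw [hD₂αp, hD₂βp, hD₁'αp, hD₁'βp]
  have c2 : op (D₁ ((α ^ k') ((β ^ l') x))) ((α ^ k) ((β ^ l) (D₂' y)))
      = op ((α ^ k') ((β ^ l') (D₁ x))) (D₂' ((α ^ k) ((β ^ l) y))) := by
    rw [hD₁αp, hD₁βp, hD₂'αp, hD₂'βp]
  rw [← hP y, ← hP x] at e1
  rw [← hP2 y, ← hP2 x] at e2
  rw [c1, c2] at e1
  simp only [LinearMap.sub_apply, LinearMap.comp_apply, map_sub]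
  rw [e1, e2]
  abel

/-- The commutator of two generalized derivations is a generalized derivation. -/
theorem bhGenDerivation_comm {K A : Type*} [Field K] [CharZero K]
    [AddCommGroup A] [Module K A]
    (br mul : A →ₗ[K] A →ₗ[K] A) (α β : A →ₗ[K] A)
    (h : IsBiHomPoisson br mul α β)
    (k l k' l' : ℕ) (D₁ D₂ : A →ₗ[K] A)
    (hD₁ : IsBHGenDerivation br mul α β k l D₁)
    (hD₂ : IsBHGenDerivation br mul α β k' l' D₂) :
    IsBHGenDerivation br mul α β (k + k') (l + l') (D₁ ∘ₗ D₂ - D₂ ∘ₗ D₁) := by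
  obtain ⟨h1α, h1β, D₁', D₁'', h1'α, h1'β, h1''α, h1''β, hbr1, hmul1⟩ := hD₁
  obtain ⟨h2α, h2β, D₂', D₂'', h2'α, h2'β, h2''α, h2''β, hbr2, hmul2⟩ := hD₂
  refine ⟨?_, ?_, D₁' ∘ₗ D₂' - D₂' ∘ₗ D₁', D₁'' ∘ₗ D₂'' - D₂'' ∘ₗ D₁'',
    ?_, ?_, ?_, ?_, ?_, ?_⟩
  · intro x; simp [h1α, h2α]
  · intro x; simp [h1β, h2β]
  · intro x; simp [h1'α, h2'α]
  · intro x; simp [h1'β, h2'β]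
  · intro x; simp [h1''α, h2''α]
  · intro x; simp [h1''β, h2''β]
  · exact keyLemma br α β k l k' l' h.comm_maps D₁ D₂ D₁' D₂' D₁'' D₂''
      h1α h1β h2α h2β h1'α h1'β h2'α h2'β hbr1 hbr2
  · exact keyLemma mul α β k l k' l' h.comm_maps D₁ D₂ D₁' D₂' D₁'' D₂''
      h1α h1β h2α h2β h1'α h1'β h2'α h2'β hmul1 hmul2
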